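/- arXiv:1001.4670 — 5 statements merged into one kernel-verified Lean document; each statement's English description precedes it below -/
import Mathlib

section
/- For every integer r ≥ 20, the product ∏_{i=1}^{r-1} (2i−1)! / (2π)^{2i} is greater than (2r−3)!. -/
/-!
Write `x = (2π)² < 40`. Passing from `r` to `r + 1` multiplies the product by `(2r-1)!/x^r` and
the factorial by `(2r-1)(2r-2)`, so the inequality propagates as soon as `x^r ≤ (2r-3)!`, which
holds for `r ≥ 12` because `40^r ≤ (2r-3)!` there. The base case `r = 20` is an exact integer
computation with `x` replaced by `40`.
-/

open Real Finset

theorem pow_forty_le_factorial {r : ℕ} (hr : 12 ≤ r) : 40 ^ r ≤ (2 * r - 3).factorial := by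
  induction r, hr using Nat.le_induction with
  | base => decide
  | succ r hr ih =>
    calc 40 ^ (r + 1) = 40 ^ r * 40 := pow_succ 40 r
      _ ≤ (2 * r - 3).factorial * ((2 * r - 3 + 1) * (2 * r - 3 + 2)) := by
        gcongr; nlinarith [show 21 ≤ 2 * r - 3 by omega]
      _ = (2 * (r + 1) - 3).factorial := by
        rw [show 2 * (r + 1) - 3 = 2 * r - 3 + 2 by omega, Nat.factorial_succ, Nat.factorial_succ]
        ring

theorem two_pi_sq_lt_forty : (2 * π) ^ 2 < 40 := by
  nlinarith [pi_lt_d2, pi_pos]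

theorem factorial_lt_prod_factorial_div_pow_twenty {x : ℝ} (hx₀ : 0 < x) (hx : x ≤ 40) :
    ((2 * 20 - 3).factorial : ℝ) <
      ∏ i ∈ Icc 1 (20 - 1), ((2 * i - 1).factorial : ℝ) / x ^ i := by
  have h40 : ((2 * 20 - 3).factorial : ℝ) <
      ∏ i ∈ Icc 1 (20 - 1), ((2 * i - 1).factorial : ℝ) / 40 ^ i := by
    rw [prod_div_distrib, prod_pow_eq_pow_sum, lt_div_iff₀ (by positivity)]
    exact_mod_cast (by decide : (2 * 20 - 3).factorial * 40 ^ (∑ i ∈ Icc 1 (20 - 1), i) <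
      ∏ i ∈ Icc 1 (20 - 1), (2 * i - 1).factorial)
  refine h40.trans_le (prod_le_prod (fun i _ => by positivity) fun i _ => ?_)
  gcongr

theorem factorial_lt_prod_factorial_div_pow {x : ℝ} (hx₀ : 0 < x) (hx : x ≤ 40)
    {r : ℕ} (hr : 20 ≤ r) :
    ((2 * r - 3).factorial : ℝ) < ∏ i ∈ Icc 1 (r - 1), ((2 * i - 1).factorial : ℝ) / x ^ i := by
  induction r, hr using Nat.le_induction with
  | base => exact factorial_lt_prod_factorial_div_pow_twenty hx₀ hx
  | succ r hr ih =>
    have hxr : x ^ r ≤ (2 * r - 3).factorial :=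
      (pow_le_pow_left₀ hx₀.le hx r).trans (mod_cast pow_forty_le_factorial (by omega))
    rw [show r + 1 - 1 = r - 1 + 1 by omega, prod_Icc_succ_top (by omega),
      show r - 1 + 1 = r by omega, show 2 * (r + 1) - 3 = 2 * r - 1 by omega]
    calc ((2 * r - 1).factorial : ℝ)
        = ((2 * r - 1).factorial : ℝ) / x ^ r * x ^ r := by field_simp
      _ ≤ ((2 * r - 1).factorial : ℝ) / x ^ r * (2 * r - 3).factorial := by gcongr
      _ < ((2 * r - 1).factorial : ℝ) / x ^ r *
            ∏ i ∈ Icc 1 (r - 1), ((2 * i - 1).factorial : ℝ) / x ^ i := by gcongr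
      _ = _ := mul_comm _ _

/-- For every integer `r ≥ 20`, `∏_{i=1}^{r-1} (2i−1)! / (2π)^{2i} > (2r−3)!`. -/
theorem stmt_10 (r : ℕ) (hr : 20 ≤ r) :
    (Nat.factorial (2 * r - 3) : ℝ) <
      ∏ i ∈ Finset.Icc 1 (r - 1),
        (Nat.factorial (2 * i - 1) : ℝ) / (2 * π) ^ (2 * i) := by
  simpa only [pow_mul] using
    factorial_lt_prod_factorial_div_pow (by positivity) two_pi_sq_lt_forty.le hr
end

section
/- For every prime power q ≥ 2 and integer s ≥ 2, the quantity (q+1)^{-1} q^{s+1} (1 − q^{-s}) ∏_{i=1}^{s-1} (1 − q^{-2i}) is at least (2/3)·(3q/4)^s. -/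
/-!
Since `q ≥ 2`, we have `q / (q + 1) ≥ 2 / 3`, and each of the `s` factors `1 - q⁻ˢ` and
`1 - q⁻²ⁱ` (`1 ≤ i ≤ s - 1`) is at least `1 - 1/4 = 3/4`, because all the exponents are at least `2`.
-/

namespace PrimePowerBound

variable {q : ℝ}

lemma two_thirds_le_div_add_one (hq : 2 ≤ q) : 2 / 3 ≤ q / (q + 1) := by
  rw [le_div_iff₀ (by linarith)]
  linarith

lemma three_quarters_le_one_sub_one_div_pow (hq : 2 ≤ q) {n : ℕ} (hn : 2 ≤ n) :
    3 / 4 ≤ 1 - 1 / q ^ n := by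
  have h4 : (4 : ℝ) ≤ q ^ n :=
    calc (4 : ℝ) = 2 ^ 2 := by norm_num
      _ ≤ 2 ^ n := pow_le_pow_right₀ (by norm_num) hn
      _ ≤ q ^ n := pow_le_pow_left₀ (by norm_num) hq n
  have : 1 / q ^ n ≤ 1 / 4 := one_div_le_one_div_of_le (by norm_num) h4
  linarith

lemma three_quarters_pow_le_prod (hq : 2 ≤ q) (n : ℕ) :
    (3 / 4 : ℝ) ^ n ≤ ∏ i ∈ Finset.Icc 1 n, (1 - 1 / q ^ (2 * i)) := by
  calc (3 / 4 : ℝ) ^ n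
      = ∏ _i ∈ Finset.Icc 1 n, (3 / 4 : ℝ) := by
        rw [Finset.prod_const, Nat.card_Icc, Nat.add_sub_cancel]
    _ ≤ ∏ i ∈ Finset.Icc 1 n, (1 - 1 / q ^ (2 * i)) :=
      Finset.prod_le_prod (fun _ _ => by norm_num) fun i hi =>
        three_quarters_le_one_sub_one_div_pow hq (by have := (Finset.mem_Icc.1 hi).1; omega)

end PrimePowerBound

open PrimePowerBound in
/-- For every real `q ≥ 2` (a prime power) and integer `s ≥ 2`,
`(q+1)⁻¹ q^{s+1} (1 − q^{−s}) ∏_{i=1}^{s-1} (1 − q^{−2i}) ≥ (2/3)·(3q/4)^s`. -/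
theorem stmt_13 (q : ℝ) (hq : 2 ≤ q) (s : ℕ) (hs : 2 ≤ s) :
    (2 / 3) * (3 * q / 4) ^ s ≤
      (q + 1)⁻¹ * q ^ (s + 1) * (1 - 1 / q ^ s) *
        ∏ i ∈ Finset.Icc 1 (s - 1), (1 - 1 / q ^ (2 * i)) := by
  obtain ⟨n, rfl⟩ : ∃ n, s = n + 1 := ⟨s - 1, by omega⟩
  have hratio := two_thirds_le_div_add_one hq
  have hlast := three_quarters_le_one_sub_one_div_pow hq hs
  have hprod := three_quarters_pow_le_prod hq n
  rw [Nat.add_sub_cancel]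
  calc (2 / 3) * (3 * q / 4) ^ (n + 1) = 2 / 3 * q ^ (n + 1) * (3 / 4) * (3 / 4) ^ n := by ring
    _ ≤ q / (q + 1) * q ^ (n + 1) * (1 - 1 / q ^ (n + 1)) *
          ∏ i ∈ Finset.Icc 1 n, (1 - 1 / q ^ (2 * i)) := by
      gcongr ?_ * _ * ?_ * ?_
    _ = _ := by ring
end

section
/- Suppose x > 0 satisfies (x / (5 · 11^{1/15}))^{15² − 15/2 − 2} ≤ 128 · (π/12)⁴ · 5² · 11^{2/15}. Then x ≤ 6.1. In particular, a totally real quadratic field whose discriminant satisfies this inequality with r = 15 must have discriminant 5. -/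
/-!
Since `1.18 ^ 15 > 11`, we have `11^{1/15} < 1.18`, so with `π ≤ 4` the right-hand side is below
`56`. If `x > 6.1`, the base exceeds `6.1 / 5.9 = 61/59 > 1`, and already `(61/59)^215 > 56`,
while the exponent `427/2` is at least `215`.
-/

open Real

lemma eleven_rpow_one_div_fifteen_lt : (11 : ℝ) ^ ((1 : ℝ) / 15) < 1.18 := by
  rw [one_div, rpow_inv_lt_iff_of_pos (by norm_num) (by norm_num) (by norm_num)]
  norm_num

lemma eleven_rpow_two_div_fifteen_eq :
    (11 : ℝ) ^ ((2 : ℝ) / 15) = ((11 : ℝ) ^ ((1 : ℝ) / 15)) ^ 2 := by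
  rw [← rpow_natCast, ← rpow_mul (by norm_num)]
  norm_num

lemma pi_div_twelve_pow_four_mul_eleven_rpow_lt : 128 * (π / 12) ^ 4 * 5 ^ 2 * (11 : ℝ) ^ ((2 : ℝ) / 15) < 56 := by
  have hπ : (π / 12) ^ 4 ≤ (1 / 3) ^ 4 :=
    pow_le_pow_left₀ (by positivity) (by linarith [pi_le_four]) 4
  have hroot : (11 : ℝ) ^ ((2 : ℝ) / 15) < 1.18 ^ 2 := by
    rw [eleven_rpow_two_div_fifteen_eq]
    gcongr
    exact eleven_rpow_one_div_fifteen_lt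
  calc 128 * (π / 12) ^ 4 * 5 ^ 2 * (11 : ℝ) ^ ((2 : ℝ) / 15)
      ≤ 128 * (1 / 3) ^ 4 * 5 ^ 2 * (11 : ℝ) ^ ((2 : ℝ) / 15) := by gcongr 128 * ?_ * _ * _
    _ < 128 * (1 / 3) ^ 4 * 5 ^ 2 * 1.18 ^ 2 := by gcongr
    _ < 56 := by norm_num

theorem stmt_15_general (x : ℝ)
    (h : (x / (5 * (11 : ℝ) ^ ((1 : ℝ) / 15))) ^ ((15 : ℝ) ^ 2 - 15 / 2 - 2) ≤
      128 * (π / 12) ^ 4 * 5 ^ 2 * (11 : ℝ) ^ ((2 : ℝ) / 15)) :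
    x ≤ 6.1 := by
  by_contra! hx
  set b := x / (5 * (11 : ℝ) ^ ((1 : ℝ) / 15))
  have hb : 61 / 59 < b := by
    rw [lt_div_iff₀ (by positivity)]
    nlinarith [eleven_rpow_one_div_fifteen_lt]
  have hlarge : 56 < b ^ ((15 : ℝ) ^ 2 - 15 / 2 - 2) :=
    calc (56 : ℝ) < (61 / 59) ^ 215 := by norm_num
      _ < b ^ 215 := by gcongr
      _ = b ^ (215 : ℝ) := (rpow_natCast b 215).symm
      _ ≤ b ^ ((15 : ℝ) ^ 2 - 15 / 2 - 2) :=
          rpow_le_rpow_of_exponent_le (by linarith) (by norm_num)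
  linarith [pi_div_twelve_pow_four_mul_eleven_rpow_lt]

/-- If `x > 0` satisfies `(x/(5·11^{1/15}))^{15²−15/2−2} ≤ 128·(π/12)⁴·5²·11^{2/15}`,
then `x ≤ 6.1`.  In particular a totally real quadratic field whose discriminant
satisfies this inequality (with `r = 15`) must have discriminant 5. -/
theorem stmt_15 (x : ℝ) (hx : 0 < x)
    (h : (x / (5 * (11 : ℝ) ^ ((1 : ℝ) / 15))) ^ ((15 : ℝ) ^ 2 - 15 / 2 - 2) ≤
      128 * (π / 12) ^ 4 * 5 ^ 2 * (11 : ℝ) ^ ((2 : ℝ) / 15)) :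
    x ≤ 6.1 :=
  stmt_15_general x h
end

section
/- In the unit group of the quartic field ℓ = ℚ(√5)(√α), α = 3 + 2√5, with fundamental units τ₁ = (1+√α)/2 and τ₂ = (1−√α)/2, the subgroup of U/U⁴ consisting of classes represented by ±τ₁^i τ₂^j whose image under both real embeddings of ℓ extending the place σ₀ of ℚ(√5) is positive and whose norm to ℚ(√5) is a fourth power, has exactly 4 elements, namely the classes of 1, τ₁²τ₂², −τ₁τ₂³, −τ₁³τ₂. -/
open NumberField Polynomial IntermediateField

lemma rat_sq_ne_five (q : ℚ) : q ^ 2 ≠ 5 := by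
  intro h
  have h5 : Irrational (Real.sqrt 5) := (by norm_num : Nat.Prime 5).irrational_sqrt
  have h2 : ((q : ℝ)) ^ 2 = 5 := by exact_mod_cast congrArg (fun x : ℚ => (x : ℝ)) h
  have h3 : Real.sqrt 5 = |(q : ℝ)| := by rw [← h2, Real.sqrt_sq_eq_abs]
  rw [h3] at h5
  have h4 : |(q:ℝ)| = ((|q| : ℚ) : ℝ) := by push_cast; rfl
  rw [h4] at h5
  exact Rat.not_irrational _ h5

section
variable {L : Type} [Field L] [CharZero L]

lemma split (a : L) (ha : a ^ 2 = 5) (p q : ℚ) (h : (p : L) + (q : L) * a = 0) :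
    p = 0 ∧ q = 0 := by
  by_cases hq : q = 0
  · subst hq
    norm_num at h
    exact ⟨by exact_mod_cast h, rfl⟩
  · exfalso
    have hqL : (q : L) ≠ 0 := by exact_mod_cast hq
    have hA : a = ((-p/q : ℚ) : L) := by
      push_cast
      field_simp
      linear_combination h
    apply rat_sq_ne_five (-p/q)
    have h5 : (((-p/q)^2 : ℚ) : L) = ((5:ℚ) : L) := by
      rw [Rat.cast_pow, ← hA, ha]; norm_num
    exact_mod_cast h5

lemma split' (a : L) (ha : a ^ 2 = 5) (p q p' q' : ℚ)
    (h : (p : L) + (q : L) * a = (p' : L) + (q' : L) * a) : p = p' ∧ q = q' := by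
  have h2 := split a ha (p - p') (q - q') (by push_cast; linear_combination h)
  constructor
  · linarith [h2.1]
  · linarith [h2.2]

lemma b_not_in (a b : L) (ha : a ^ 2 = 5) (hb : b ^ 2 = 3 + 2 * a) (x y : ℚ) :
    b ≠ (x : L) + (y : L) * a := by
  intro h
  have hsq : ((x^2 + 5*y^2 : ℚ) : L) + ((2*x*y : ℚ) : L) * a = ((3:ℚ):L) + ((2:ℚ):L) * a := by
    push_cast
    linear_combination hb - ((x:L) + y*a + b) * h - (y:L)^2 * ha
  have h2 := split' a ha _ _ _ _ hsq
  have h3 : x^2 + 5*y^2 = 3 := h2.1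
  have h4 : 2*x*y = 2 := h2.2
  nlinarith [sq_nonneg (x - 2*y), sq_nonneg y]

end

lemma adjoin_decomp {L : Type} [Field L] [CharZero L] (a : L) (ha : a ^ 2 = 5) (y : L)
    (hy : y ∈ Algebra.adjoin ℚ ({a} : Set L)) : ∃ r s : ℚ, y = (r : L) + (s : L) * a := by
  refine Algebra.adjoin_induction ?_ ?_ ?_ ?_ hy
  · intro x hx
    rw [Set.mem_singleton_iff] at hx
    exact ⟨0, 1, by rw [hx]; push_cast; ring⟩
  · intro q
    exact ⟨q, 0, by rw [eq_ratCast]; push_cast; ring⟩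
  · rintro x y' _ _ ⟨r1, s1, rfl⟩ ⟨r2, s2, rfl⟩
    exact ⟨r1 + r2, s1 + s2, by push_cast; ring⟩
  · rintro x y' _ _ ⟨r1, s1, rfl⟩ ⟨r2, s2, rfl⟩
    exact ⟨r1*r2 + 5*s1*s2, r1*s2 + s1*r2, by push_cast; linear_combination (s1:L)*(s2:L)*ha⟩

lemma pow_c_cases {L : Type} [Field L] [CharZero L] (a : L) (ha : a ^ 2 = 5)
    (n : ℕ) (hn : n ≤ 6) (r s : ℚ)
    (h : (-(1 + a) / 2) ^ n = ((r : L) + (s : L) * a) ^ 4) : n = 0 ∨ n = 4 := by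
  have e4 : ((r : L) + (s : L) * a) ^ 4
      = (((r^2+5*s^2)^2 + 20*r^2*s^2 : ℚ) : L) + ((4*r*s*(r^2+5*s^2) : ℚ) : L) * a := by
    push_cast
    linear_combination (6*(r:L)^2*(s:L)^2 + 4*(r:L)*(s:L)^3*a + (s:L)^4*(a^2+5)) * ha
  have e2 : ((r : L) + (s : L) * a) ^ 2 = ((r^2+5*s^2 : ℚ) : L) + ((2*r*s : ℚ) : L) * a := by
    push_cast
    linear_combination (s:L)^2 * ha
  interval_cases n
  · exact Or.inl rfl
  · -- n = 1
    exfalso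
    rw [e4] at h
    have hL : (-(1 + a) / 2) ^ 1 = ((-1/2 : ℚ) : L) + ((-1/2 : ℚ) : L) * a := by
      push_cast; ring
    rw [hL] at h
    have := split' a ha _ _ _ _ h
    nlinarith [this.1, sq_nonneg (r^2+5*s^2), sq_nonneg (r*s)]
  · -- n = 2 : y^2 = ±(1+a)/2
    exfalso
    have hfac : (((r : L) + (s : L) * a) ^ 2 - (1+a)/2) * (((r : L) + (s : L) * a) ^ 2 + (1+a)/2) = 0 := by
      linear_combination -h
    rcases mul_eq_zero.mp hfac with hf | hf
    · have h2 : ((r^2+5*s^2 : ℚ) : L) + ((2*r*s : ℚ) : L) * a = ((1/2 : ℚ) : L) + ((1/2 : ℚ) : L) * a := by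
        push_cast at *
        linear_combination hf + e2 - 2*(s:L)^2*ha
      have := split' a ha _ _ _ _ h2
      nlinarith [this.1, this.2, sq_nonneg (r - 2*s), sq_nonneg s]
    · have h2 : ((r^2+5*s^2 : ℚ) : L) + ((2*r*s : ℚ) : L) * a = ((-1/2 : ℚ) : L) + ((-1/2 : ℚ) : L) * a := by
        push_cast at *
        linear_combination hf + e2 - 2*(s:L)^2*ha
      have := split' a ha _ _ _ _ h2
      nlinarith [this.1, sq_nonneg r, sq_nonneg s]
  · -- n = 3
    exfalso
    rw [e4] at h
    have hL : (-(1 + a) / 2) ^ 3 = ((-2 : ℚ) : L) + ((-1 : ℚ) : L) * a := by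
      push_cast
      linear_combination (-(3+a)/8) * ha
    rw [hL] at h
    have := split' a ha _ _ _ _ h
    nlinarith [this.1, sq_nonneg (r^2+5*s^2), sq_nonneg (r*s)]
  · exact Or.inr rfl
  · -- n = 5
    exfalso
    rw [e4] at h
    have hL : (-(1 + a) / 2) ^ 5 = ((-11/2 : ℚ) : L) + ((-5/2 : ℚ) : L) * a := by
      push_cast
      linear_combination (-(a^3+5*a^2+15*a+35)/32) * ha
    rw [hL] at h
    have := split' a ha _ _ _ _ h
    nlinarith [this.1, sq_nonneg (r^2+5*s^2), sq_nonneg (r*s)]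
  · -- n = 6 : y^2 = ±(2+a)
    exfalso
    have hfac : (((r : L) + (s : L) * a) ^ 2 - (2+a)) * (((r : L) + (s : L) * a) ^ 2 + (2+a)) = 0 := by
      linear_combination -h + ((a^4+6*a^3+20*a^2+50*a+51)/64) * ha
    rcases mul_eq_zero.mp hfac with hf | hf
    · have h2 : ((r^2+5*s^2 : ℚ) : L) + ((2*r*s : ℚ) : L) * a = ((2 : ℚ) : L) + ((1 : ℚ) : L) * a := by
        push_cast at *
        linear_combination hf + e2 - 2*(s:L)^2*ha
      have := split' a ha _ _ _ _ h2
      have h3 := this.1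
      have h4 := this.2
      nlinarith [sq_nonneg (r - 2*s), sq_nonneg s, sq_nonneg (r*s), sq_nonneg (r+2*s)]
    · have h2 : ((r^2+5*s^2 : ℚ) : L) + ((2*r*s : ℚ) : L) * a = ((-2 : ℚ) : L) + ((-1 : ℚ) : L) * a := by
        push_cast at *
        linear_combination hf + e2 - 2*(s:L)^2*ha
      have := split' a ha _ _ _ _ h2
      nlinarith [this.1, sq_nonneg r, sq_nonneg s]

lemma exists_emb (L : Type) [Field L] [NumberField L] (a b : L)
    (ha : a ^ 2 = 5) (hb : b ^ 2 = 3 + 2 * a) (hgen : Algebra.adjoin ℚ {a, b} = ⊤)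
    (β : ℝ) (hβ : β ^ 4 - 6 * β ^ 2 - 11 = 0) : ∃ φ : L →+* ℝ, φ b = β := by
  have hdep : ∀ p q r s : ℚ, (p : L) + (q : L) * a + ((r : L) + (s : L) * a) * b = 0 →
      p = 0 ∧ q = 0 ∧ r = 0 ∧ s = 0 := by
    intro p q r s h
    have hrs : (r : L) + (s : L) * a = 0 := by
      by_contra hne
      have hden : r^2 - 5*s^2 ≠ 0 := by
        intro h0
        by_cases hs : s = 0
        · apply hne
          have hr : r = 0 := by nlinarith [sq_nonneg r]
          simp [hr, hs]
        · exact rat_sq_ne_five (r/s) (by field_simp; linarith)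
      have hdenL : ((r^2 - 5*s^2 : ℚ) : L) ≠ 0 := by exact_mod_cast hden
      apply b_not_in a b ha hb (-(p*r - 5*q*s)/(r^2-5*s^2)) (-(q*r - p*s)/(r^2-5*s^2))
      have key : ((r^2 - 5*s^2 : ℚ) : L) * b + ((p*r - 5*q*s : ℚ) : L) + ((q*r - p*s : ℚ) : L) * a = 0 := by
        push_cast
        linear_combination ((r:L) - (s:L)*a) * h + ((q:L)*(s:L) + (s:L)^2*b) * ha
      have hgoal : b = ((-(p*r - 5*q*s) : ℚ) + (-(q*r - p*s) : ℚ) * a) / ((r^2-5*s^2 : ℚ) : L) := by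
        rw [eq_div_iff hdenL]
        push_cast at key ⊢
        linear_combination key
      rw [hgoal]
      push_cast
      ring
    have h2 := split a ha r s hrs
    rw [hrs, zero_mul, add_zero] at h
    have h3 := split a ha p q h
    exact ⟨h3.1, h3.2, h2.1, h2.2⟩
  -- linear independence
  have hli : LinearIndependent ℚ ![(1:L), b, b^2, b^3] := by
    rw [Fintype.linearIndependent_iff]
    intro g hg
    have hsum : ((g 0 : ℚ) : L) + (g 1 : L) * b + (g 2 : L) * b^2 + (g 3 : L) * b^3 = 0 := by
      simp only [Fin.sum_univ_four, Matrix.cons_val_zero, Matrix.cons_val_one, Matrix.head_cons,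
        Matrix.cons_val_two, Matrix.tail_cons, Matrix.cons_val_three, Rat.smul_def] at hg
      linear_combination hg
    have key : ((g 0 + 3*g 2 : ℚ) : L) + ((2*g 2 : ℚ):L) * a
        + (((g 1 + 3*g 3 : ℚ):L) + ((2*g 3 : ℚ):L) * a) * b = 0 := by
      push_cast
      linear_combination hsum - ((g 2 : L) + (g 3 : L) * b) * hb
    obtain ⟨e1, e2, e3, e4⟩ := hdep _ _ _ _ key
    intro i
    fin_cases i <;> simp <;> linarith
  have hfr : 4 ≤ Module.finrank ℚ L := by
    simpa using hli.fintype_card_le_finrank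
  -- the polynomial
  set P : ℚ[X] := X^4 - (C 6 * X^2 + C 11) with hP
  have hPmonic : P.Monic := by
    apply Polynomial.monic_X_pow_sub
    exact lt_of_le_of_lt (by compute_degree) (by norm_num : (2 : WithBot ℕ) < 4)
  have hPdeg : P.natDegree = 4 := by
    rw [hP]
    compute_degree!
  have hPne : P ≠ 0 := hPmonic.ne_zero
  have haev : aeval b P = 0 := by
    simp only [hP, map_sub, map_add, map_mul, map_pow, aeval_X, aeval_C, map_ofNat]
    linear_combination ((b:L)^2 - 3 + 2*a) * hb + 4 * ha
  have hbi : IsIntegral ℚ b := ⟨P, hPmonic, by simpa [Polynomial.aeval_def] using haev⟩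
  -- Q(b) = top
  have hQb : ℚ⟮b⟯ = ⊤ := by
    rw [eq_top_iff]
    intro x _
    have hx : x ∈ Algebra.adjoin ℚ ({a, b} : Set L) := hgen ▸ Algebra.mem_top
    have hsub : Algebra.adjoin ℚ ({a, b} : Set L) ≤ ℚ⟮b⟯.toSubalgebra := by
      apply Algebra.adjoin_le
      rintro y (rfl | hy)
      · have hbm : b ∈ ℚ⟮b⟯ := IntermediateField.mem_adjoin_simple_self ℚ b
        have h2 : ((b^2 - 3)/2 : L) ∈ ℚ⟮b⟯ := by
          have h3 : (3:L) ∈ ℚ⟮b⟯ := by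
            have := IntermediateField.algebraMap_mem ℚ⟮b⟯ (3:ℚ)
            rwa [eq_ratCast, Rat.cast_ofNat] at this
          have h2' : (2:L) ∈ ℚ⟮b⟯ := by
            have := IntermediateField.algebraMap_mem ℚ⟮b⟯ (2:ℚ)
            rwa [eq_ratCast, Rat.cast_ofNat] at this
          exact div_mem (sub_mem (pow_mem hbm 2) h3) h2'
        have : y = (b^2 - 3)/2 := by linear_combination (-1/2 : L) * hb
        rw [this]; exact h2
      · simp only [Set.mem_singleton_iff] at hy
        rw [hy]
        exact IntermediateField.mem_adjoin_simple_self ℚ b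
    exact hsub hx
  -- minpoly = P
  have hdvd := minpoly.dvd ℚ b haev
  have hd4 : (minpoly ℚ b).natDegree = 4 := by
    have h1 : (minpoly ℚ b).natDegree ≤ 4 := by
      simpa [hPdeg] using Polynomial.natDegree_le_of_dvd hdvd hPne
    have h2 : Module.finrank ℚ (ℚ⟮b⟯ : IntermediateField ℚ L) = (minpoly ℚ b).natDegree :=
      IntermediateField.adjoin.finrank hbi
    have h3 : Module.finrank ℚ (ℚ⟮b⟯ : IntermediateField ℚ L) = Module.finrank ℚ L := by
      rw [hQb]
      exact (IntermediateField.topEquiv (F := ℚ) (E := L)).toLinearEquiv.finrank_eq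
    omega
  have hmp : minpoly ℚ b = P := by
    obtain ⟨c, hc⟩ := hdvd
    have hmne := minpoly.ne_zero hbi
    have hcne : c ≠ 0 := fun h0 => hPne (by rw [hc, h0, mul_zero])
    have hcdeg : c.natDegree = 0 := by
      have hmul := Polynomial.natDegree_mul hmne hcne
      rw [← hc, hPdeg, hd4] at hmul
      omega
    obtain ⟨k, rfl⟩ : ∃ k, c = C k := ⟨c.coeff 0, Polynomial.eq_C_of_natDegree_eq_zero hcdeg⟩
    have hlc : k = 1 := by
      have h1 : P.leadingCoeff = (minpoly ℚ b).leadingCoeff * (C k).leadingCoeff := by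
        rw [hc, Polynomial.leadingCoeff_mul]
      rw [hPmonic.leadingCoeff, (minpoly.monic hbi).leadingCoeff, one_mul,
        Polynomial.leadingCoeff_C] at h1
      exact h1.symm
    rw [hc, hlc, map_one, mul_one]
  -- the root
  have hroot : eval₂ (algebraMap ℚ ℝ) β (minpoly ℚ b) = 0 := by
    rw [hmp, hP]
    simp [eval₂_sub, eval₂_add, eval₂_mul, eval₂_pow]
    linarith
  -- assemble
  let E : AdjoinRoot (minpoly ℚ b) ≃ₐ[ℚ] L :=
    (IntermediateField.adjoinRootEquivAdjoin ℚ hbi).trans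
      ((IntermediateField.equivOfEq hQb).trans IntermediateField.topEquiv)
  have h1 : E (AdjoinRoot.root (minpoly ℚ b)) = b := by
    show ((IntermediateField.equivOfEq hQb).trans IntermediateField.topEquiv)
      ((IntermediateField.adjoinRootEquivAdjoin ℚ hbi) (AdjoinRoot.root (minpoly ℚ b))) = b
    rw [IntermediateField.adjoinRootEquivAdjoin_apply_root]
    rfl
  have h2 : E.symm b = AdjoinRoot.root (minpoly ℚ b) := by
    rw [AlgEquiv.symm_apply_eq]
    exact h1.symm
  refine ⟨(AdjoinRoot.lift (algebraMap ℚ ℝ) β hroot).comp E.symm.toAlgHom.toRingHom, ?_⟩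
  show AdjoinRoot.lift (algebraMap ℚ ℝ) β hroot (E.symm b) = β
  rw [h2, AdjoinRoot.lift_root]

set_option maxHeartbeats 1000000 in
/-- In the quartic field `ℓ = ℚ(√5)(√α)`, `α = 3 + 2√5`, with fundamental units
`τ₁ = (1+√α)/2`, `τ₂ = (1−√α)/2`, the classes mod fourth powers represented by
`±τ₁^i τ₂^j` (0 ≤ i,j ≤ 3) that are positive under both real embeddings of `ℓ`
and whose norm to `ℚ(√5)` (namely `(τ₁τ₂)^{i+j}`) is a fourth power in `ℚ(√5)`,
are exactly the four classes of `1`, `τ₁²τ₂²`, `−τ₁τ₂³`, `−τ₁³τ₂`. -/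
theorem stmt_18 (L : Type) [Field L] [NumberField L] (a b : L)
    (ha : a ^ 2 = 5) (hb : b ^ 2 = 3 + 2 * a)
    (hgen : Algebra.adjoin ℚ {a, b} = ⊤) :
    let τ₁ : L := (1 + b) / 2
    let τ₂ : L := (1 - b) / 2
    {u : L | ∃ ε ∈ ({1, -1} : Set L), ∃ i j : Fin 4,
        u = ε * τ₁ ^ (i : ℕ) * τ₂ ^ (j : ℕ) ∧
        (∀ φ : L →+* ℝ, 0 < φ u) ∧
        (∃ y ∈ Algebra.adjoin ℚ ({a} : Set L), (τ₁ * τ₂) ^ ((i : ℕ) + (j : ℕ)) = y ^ 4)} =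
      {1, τ₁ ^ 2 * τ₂ ^ 2, -(τ₁ * τ₂ ^ 3), -(τ₁ ^ 3 * τ₂)} := by
  intro τ₁ τ₂
  have hτ₁ : τ₁ = (1 + b) / 2 := rfl
  have hτ₂ : τ₂ = (1 - b) / 2 := rfl
  -- basic nonvanishing facts
  have hane : a ≠ -1 := by
    intro h; rw [h] at ha; norm_num at ha
  have ha1 : (1 : L) + a ≠ 0 := by
    intro h; exact hane (by linear_combination h)
  have hbne1 : b ≠ -1 := by
    intro h
    rw [h] at hb
    exact hane (by linear_combination (-1/2 : L) * hb)
  have hbne1' : b ≠ 1 := by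
    intro h
    rw [h] at hb
    exact hane (by linear_combination (-1/2 : L) * hb)
  have hτ₁ne : τ₁ ≠ 0 := by
    rw [hτ₁]
    intro h
    exact hbne1 (by linear_combination 2 * h)
  have hτ₂ne : τ₂ ≠ 0 := by
    rw [hτ₂]
    intro h
    exact hbne1' (by linear_combination -2 * h)
  have hprod : τ₁ * τ₂ = -(1 + a) / 2 := by
    rw [hτ₁, hτ₂]
    linear_combination (-1/4 : L) * hb
  -- membership of -(1+a)/2 in adjoin ℚ {a}
  have hymem : (-(1 + a) / 2 : L) ∈ Algebra.adjoin ℚ ({a} : Set L) := by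
    have haa : a ∈ Algebra.adjoin ℚ ({a} : Set L) := Algebra.subset_adjoin rfl
    have hhalf : ((-1/2 : ℚ) : L) ∈ Algebra.adjoin ℚ ({a} : Set L) := by
      rw [← eq_ratCast (algebraMap ℚ L)]
      exact Subalgebra.algebraMap_mem _ _
    have hm := mul_mem hhalf (add_mem (one_mem (Algebra.adjoin ℚ ({a} : Set L))) haa)
    have : (-(1 + a) / 2 : L) = ((-1/2 : ℚ) : L) * (1 + a) := by push_cast; ring
    rw [this]
    exact hm
  -- real-embedding generic positivity of a
  have hφa_pos : ∀ ψ : L →+* ℝ, 0 < ψ a := by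
    intro ψ
    have h1 : (ψ a) ^ 2 = 5 := by
      rw [← map_pow, ha]
      norm_num [map_ofNat]
    have h2 : (ψ b) ^ 2 = 3 + 2 * ψ a := by
      rw [← map_pow, hb, map_add, map_mul, map_ofNat]
      norm_num [map_ofNat]
    nlinarith [sq_nonneg (ψ b)]
  -- the distinguished embedding
  have hs5 : (Real.sqrt 5) ^ 2 = 5 := Real.sq_sqrt (by norm_num)
  have hs5nn : (0:ℝ) ≤ Real.sqrt 5 := Real.sqrt_nonneg 5
  set β : ℝ := Real.sqrt (3 + 2 * Real.sqrt 5) with hβdef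
  have hβnn : 0 ≤ β := Real.sqrt_nonneg _
  have hβsq : β ^ 2 = 3 + 2 * Real.sqrt 5 := Real.sq_sqrt (by positivity)
  have hβpoly : β ^ 4 - 6 * β ^ 2 - 11 = 0 := by nlinarith [hβsq, hs5]
  obtain ⟨φ, hφb⟩ := exists_emb L a b ha hb hgen β hβpoly
  have hβ1 : 1 < β := by nlinarith [hβsq, hs5nn, hβnn]
  have hφτ₁ : φ τ₁ = (1 + β) / 2 := by
    rw [hτ₁, map_div₀, map_add, map_one, hφb, map_ofNat]
  have hφτ₂ : φ τ₂ = (1 - β) / 2 := by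
    rw [hτ₂, map_div₀, map_sub, map_one, hφb, map_ofNat]
  have hA : (0:ℝ) < (1 + β) / 2 := by linarith
  have hB : (1 - β) / 2 < 0 := by linarith
  ext u
  simp only [Set.mem_setOf_eq, Set.mem_insert_iff, Set.mem_singleton_iff]
  constructor
  · rintro ⟨ε, hε, i, j, hu, hpos, y, hy, hy4⟩
    have hε' : ε = 1 ∨ ε = -1 := by simpa using hε
    obtain ⟨r, s, rfl⟩ := adjoin_decomp a ha y hy
    have hile := i.isLt
    have hjle := j.isLt
    have hn : (i : ℕ) + (j : ℕ) ≤ 6 := by omega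
    have h04 := pow_c_cases a ha ((i : ℕ) + (j : ℕ)) hn r s (by rw [← hprod]; exact hy4)
    have hups := hpos φ
    rw [hu, map_mul, map_mul, map_pow, map_pow, hφτ₁, hφτ₂] at hups
    rcases h04 with h0 | h4
    · have hi0 : (i : ℕ) = 0 := by omega
      have hj0 : (j : ℕ) = 0 := by omega
      rcases hε' with rfl | rfl
      · left
        rw [hu, hi0, hj0]
        ring
      · exfalso
        rw [hi0, hj0, map_neg, map_one] at hups
        norm_num at hups
    · have hcase : ((i : ℕ) = 1 ∧ (j : ℕ) = 3) ∨ ((i : ℕ) = 2 ∧ (j : ℕ) = 2) ∨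
          ((i : ℕ) = 3 ∧ (j : ℕ) = 1) := by omega
      have hB3 : ((1 - β) / 2) ^ 3 < 0 := by
        exact Odd.pow_neg ⟨1, by norm_num⟩ hB
      have hA3 : 0 < ((1 + β) / 2) ^ 3 := pow_pos hA 3
      have hA2 : 0 < ((1 + β) / 2) ^ 2 := pow_pos hA 2
      have hB2 : 0 < ((1 - β) / 2) ^ 2 := by nlinarith [hB]
      have hB1 : ((1 - β) / 2) ^ 1 < 0 := by simpa using hB
      have hA1 : 0 < ((1 + β) / 2) ^ 1 := by simpa using hA
      rcases hcase with ⟨hi', hj'⟩ | ⟨hi', hj'⟩ | ⟨hi', hj'⟩ <;>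
          rw [hi', hj'] at hups hu <;>
          rcases hε' with rfl | rfl
      · exfalso
        rw [map_one φ] at hups
        nlinarith [mul_neg_of_pos_of_neg hA1 hB3]
      · right; right; left
        rw [hu]; ring
      · right; left
        rw [hu]; ring
      · exfalso
        rw [map_neg φ, map_one φ] at hups
        nlinarith [mul_pos hA2 hB2]
      · exfalso
        rw [map_one φ] at hups
        nlinarith [mul_neg_of_pos_of_neg hA3 hB1]
      · right; right; right
        rw [hu]; ring
  · intro hu
    rcases hu with rfl | rfl | rfl | rfl
    · exact ⟨1, Or.inl rfl, 0, 0, by norm_num, fun ψ => by simp,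
        ⟨1, one_mem _, by norm_num⟩⟩
    · refine ⟨1, Or.inl rfl, 2, 2, by norm_num, ?_, ?_⟩
      · intro ψ
        rw [map_mul, map_pow, map_pow]
        have h1 : ψ τ₁ ≠ 0 := (map_ne_zero ψ).mpr hτ₁ne
        have h2 : ψ τ₂ ≠ 0 := (map_ne_zero ψ).mpr hτ₂ne
        positivity
      · refine ⟨-(1 + a) / 2, hymem, ?_⟩
        rw [show ((2 : Fin 4) : ℕ) + ((2 : Fin 4) : ℕ) = 4 from rfl, hprod]
    · refine ⟨-1, Or.inr rfl, 1, 3, by rw [show ((1 : Fin 4) : ℕ) = 1 from rfl, show ((3 : Fin 4) : ℕ) = 3 from rfl]; ring, ?_, ?_⟩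
      · intro ψ
        have hrw : -(τ₁ * τ₂ ^ 3) = (1 + a) / 2 * τ₂ ^ 2 := by
          rw [hτ₁, hτ₂]
          linear_combination ((1 - b)^2 / 16) * hb
        rw [hrw, map_mul, map_div₀, map_add, map_one, map_ofNat, map_pow]
        have h2 : ψ τ₂ ≠ 0 := (map_ne_zero ψ).mpr hτ₂ne
        have := hφa_pos ψ
        positivity
      · refine ⟨-(1 + a) / 2, hymem, ?_⟩
        rw [show ((1 : Fin 4) : ℕ) + ((3 : Fin 4) : ℕ) = 4 from rfl, hprod]
    · refine ⟨-1, Or.inr rfl, 3, 1, by rw [show ((3 : Fin 4) : ℕ) = 3 from rfl, show ((1 : Fin 4) : ℕ) = 1 from rfl]; ring, ?_, ?_⟩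
      · intro ψ
        have hrw : -(τ₁ ^ 3 * τ₂) = (1 + a) / 2 * τ₁ ^ 2 := by
          rw [hτ₁, hτ₂]
          linear_combination ((1 + b)^2 / 16) * hb
        rw [hrw, map_mul, map_div₀, map_add, map_one, map_ofNat, map_pow]
        have h1 : ψ τ₁ ≠ 0 := (map_ne_zero ψ).mpr hτ₁ne
        have := hφa_pos ψ
        positivity
      · refine ⟨-(1 + a) / 2, hymem, ?_⟩
        rw [show ((3 : Fin 4) : ℕ) + ((1 : Fin 4) : ℕ) = 4 from rfl, hprod]
end

section
/- For every odd integer n ≥ 29, writing r = (n+1)/2, the ratio (5^{r²−r/2} · 11^{r−1/2} · (r−1)! / (2^{2r−1} π^r · 2^{r+1})) · ∏_{i=1}^{r−1} (2i−1)!/(2π)^{2i} is greater than (r−1)!. -/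
/-!
For `i ≥ 9` the factor `(2i-1)!/(2π)^{2i}` is at least `1`, and the first eight factors
are at least `1/(2π)^{2i}`, so the product is at least `(2π)^{-72}`. Since `r² - r/2 ≥ 14r`
for `r ≥ 15`, the prefactor is at least `5^{14r}/(8π)^r ≥ 5^{11r} ≥ 5^{165}`, which beats
`(2π)^{72} ≤ 8^{72}`.
-/

open Real Finset Nat

theorem two_pi_pow_le_factorial {i : ℕ} (hi : 9 ≤ i) :
    (2 * π) ^ (2 * i) ≤ ((2 * i - 1)! : ℝ) := by
  induction i, hi using Nat.le_induction with
  | base =>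
    calc (2 * π) ^ (2 * 9) ≤ (6.3 : ℝ) ^ 18 :=
          pow_le_pow_left₀ (by positivity) (by linarith [pi_lt_d2]) _
      _ ≤ ((2 * 9 - 1)! : ℝ) := by norm_num [Nat.factorial]
  | succ k hk ih =>
    have hfac : ((2 * (k + 1) - 1)! : ℝ) = (2 * k + 1) * (2 * k) * (2 * k - 1)! := by
      rw [show 2 * (k + 1) - 1 = (2 * k - 1) + 1 + 1 by omega, Nat.factorial_succ,
        Nat.factorial_succ, show 2 * k - 1 + 1 = 2 * k by omega]
      push_cast
      ring
    have hk' : (9 : ℝ) ≤ k := by exact_mod_cast hk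
    calc (2 * π) ^ (2 * (k + 1)) = (2 * π) ^ 2 * (2 * π) ^ (2 * k) := by ring
      _ ≤ (2 * k + 1) * (2 * k) * (2 * k - 1)! := by
        gcongr
        nlinarith [pi_lt_d2, pi_pos]
      _ = _ := hfac.symm

theorem one_div_two_pi_pow_le_prod {m : ℕ} (hm : 8 ≤ m) :
    1 / (2 * π) ^ 72 ≤ ∏ i ∈ Icc 1 m, ((2 * i - 1)! : ℝ) / (2 * π) ^ (2 * i) := by
  calc 1 / (2 * π) ^ 72 = ∏ i ∈ Icc 1 8, 1 / (2 * π) ^ (2 * i) := by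
        rw [prod_div_distrib, prod_const_one, prod_pow_eq_pow_sum]
        rfl
    _ ≤ ∏ i ∈ Icc 1 8, ((2 * i - 1)! : ℝ) / (2 * π) ^ (2 * i) := by
        gcongr
        exact_mod_cast Nat.one_le_iff_ne_zero.mpr (Nat.factorial_ne_zero _)
    _ ≤ _ := by
        refine prod_le_prod_of_subset_of_one_le (Icc_subset_Icc le_rfl hm)
          (fun _ _ => by positivity) fun i hi hi8 => ?_
        rw [one_le_div (by positivity)]
        exact two_pi_pow_le_factorial (by simp at hi hi8; omega)

theorem two_pi_pow_lt_prefactor {r : ℕ} (hr : 15 ≤ r) :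
    (2 * π) ^ 72 < (5 : ℝ) ^ ((r : ℝ) ^ 2 - (r : ℝ) / 2) * (11 : ℝ) ^ ((r : ℝ) - 1 / 2) /
      (2 ^ (2 * r - 1) * π ^ r * 2 ^ (r + 1)) := by
  have hr' : (15 : ℝ) ≤ r := by exact_mod_cast hr
  have hnum :
      (5 : ℝ) ^ (14 * r) ≤ 5 ^ ((r : ℝ) ^ 2 - (r : ℝ) / 2) * 11 ^ ((r : ℝ) - 1 / 2) := by
    calc (5 : ℝ) ^ (14 * r) ≤ 5 ^ ((r : ℝ) ^ 2 - (r : ℝ) / 2) := by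
          rw [← rpow_natCast]
          exact rpow_le_rpow_of_exponent_le (by norm_num) (by push_cast; nlinarith)
      _ ≤ _ := le_mul_of_one_le_right (by positivity) (one_le_rpow (by norm_num) (by linarith))
  have hden : 2 ^ (2 * r - 1) * π ^ r * 2 ^ (r + 1) ≤ (125 : ℝ) ^ r := by
    calc 2 ^ (2 * r - 1) * π ^ r * 2 ^ (r + 1) = (8 : ℝ) ^ r * π ^ r := by
          rw [mul_right_comm, ← pow_add, show 2 * r - 1 + (r + 1) = 3 * r by omega, pow_mul]
          norm_num
      _ ≤ 8 ^ r * 4 ^ r := by gcongr; exact pi_le_four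
      _ ≤ 125 ^ r := by rw [← mul_pow]; gcongr; norm_num
  calc (2 * π) ^ 72 ≤ (8 : ℝ) ^ 72 :=
        pow_le_pow_left₀ (by positivity) (by linarith [pi_le_four]) _
    _ < 5 ^ 165 := by norm_num
    _ ≤ 5 ^ (11 * r) := pow_le_pow_right₀ (by norm_num) (by omega)
    _ = 5 ^ (14 * r) / 125 ^ r := by
        rw [eq_div_iff (by positivity), show (125 : ℝ) = 5 ^ 3 by norm_num, ← pow_mul,
          ← pow_add]
        ring_nf
    _ ≤ _ := div_le_div₀ (by positivity) hnum (by positivity) hden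

theorem stmt_19_general (n : ℕ) (hn : 29 ≤ n) :
    let r := (n + 1) / 2
    ((r - 1).factorial : ℝ) <
      (5 : ℝ) ^ ((r : ℝ) ^ 2 - (r : ℝ) / 2) * (11 : ℝ) ^ ((r : ℝ) - 1 / 2) *
        ((r - 1).factorial : ℝ) / (2 ^ (2 * r - 1) * π ^ r * 2 ^ (r + 1)) *
        ∏ i ∈ Finset.Icc 1 (r - 1),
          (Nat.factorial (2 * i - 1) : ℝ) / (2 * π) ^ (2 * i) := by
  intro r
  have hprefactor := two_pi_pow_lt_prefactor (r := r) (by omega)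
  have hprod := one_div_two_pi_pow_le_prod (m := r - 1) (by omega)
  have hone := mul_lt_mul hprefactor hprod (by positivity) (hprefactor.trans' (by positivity)).le
  rw [mul_one_div_cancel (by positivity)] at hone
  have hmul := mul_lt_mul_of_pos_left hone (Nat.cast_pos.mpr (r - 1).factorial_pos)
  rw [mul_one] at hmul
  exact hmul.trans_eq (by ring)

/-- For every odd `n ≥ 29`, with `r = (n+1)/2`, the ratio
`(5^{r²−r/2} · 11^{r−1/2} · (r−1)! / (2^{2r−1} π^r · 2^{r+1})) · ∏_{i=1}^{r−1} (2i−1)!/(2π)^{2i}`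
exceeds `(r−1)!`. -/
theorem stmt_19 (n : ℕ) (hodd : Odd n) (hn : 29 ≤ n) :
    let r := (n + 1) / 2
    ((r - 1).factorial : ℝ) <
      (5 : ℝ) ^ ((r : ℝ) ^ 2 - (r : ℝ) / 2) * (11 : ℝ) ^ ((r : ℝ) - 1 / 2) *
        ((r - 1).factorial : ℝ) / (2 ^ (2 * r - 1) * π ^ r * 2 ^ (r + 1)) *
        ∏ i ∈ Finset.Icc 1 (r - 1),
          (Nat.factorial (2 * i - 1) : ℝ) / (2 * π) ^ (2 * i) :=
  stmt_19_general n hn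
end
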